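/- arXiv:math/0606701 — 2 statements merged into one kernel-verified Lean document; each statement's English description precedes it below -/
import Mathlib

section
/- Let f(q) = Σ_{n≥1} a_n q^n be a formal power series over a commutative ring R satisfying the Hecke recurrences a_{n₁n₂} = a_{n₁}a_{n₂} for coprime n₁,n₂ and a_{l^{i-1}} a_l = a_{l^i} + l^{m-1} a_{l^{i-2}} with m = 2 for all primes l not dividing N and i ≥ 2. Then for any prime p not dividing N and any n ≥ 1, writing a_x = 0 when x ∉ ℤ, the coefficient c_n := (1/p)(a_{n/p²}·p²/n − a_{n/p}·a_p·p/n + a_n·p/n) satisfies c_n = a_n/n if p ∤ n and c_n = 0 if p | n; equivalently, in ℚ[[q]]: (1/p)·Σ_{n≥1} (a_n/n)(q^{np²} − a_p q^{np} + p q^n) = Σ_{(n,p)=1} (a_n/n) q^n. -/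
/-- For a sequence `(a_n)` satisfying the weight-2 Hecke recurrences and a prime
`p ∤ N`, one has, in `ℚ[[q]]`:
`(1/p)·Σ_{n≥1} (a_n/n)(q^{np²} − a_p q^{np} + p q^n) = Σ_{(n,p)=1} (a_n/n) q^n`,
stated coefficientwise: the coefficient of `q^m` on the left is
`(1/p)(a_{m/p²}/(m/p²) − a_p·a_{m/p}/(m/p) + p·a_m/m)` (terms with non-integral
index being `0`). -/
theorem stmt3 (N : ℕ) (hN : 1 ≤ N) (a : ℕ → ℚ) (ha1 : a 1 = 1)
    (hmul : ∀ n₁ n₂ : ℕ, 1 ≤ n₁ → 1 ≤ n₂ → Nat.Coprime n₁ n₂ →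
      a (n₁ * n₂) = a n₁ * a n₂)
    (hrec : ∀ l i : ℕ, Nat.Prime l → ¬ l ∣ N → 2 ≤ i →
      a (l ^ (i - 1)) * a l = a (l ^ i) + l * a (l ^ (i - 2)))
    (p : ℕ) (hp : p.Prime) (hpN : ¬ p ∣ N) :
    (PowerSeries.mk fun m : ℕ => if m = 0 then 0 else
        (1 / (p : ℚ)) * ((if p ^ 2 ∣ m then a (m / p ^ 2) / ((m / p ^ 2 : ℕ) : ℚ) else 0)
          - a p * (if p ∣ m then a (m / p) / ((m / p : ℕ) : ℚ) else 0)
          + p * a m / m) : PowerSeries ℚ)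
      = PowerSeries.mk fun m : ℕ => if m ≠ 0 ∧ ¬ p ∣ m then a m / m else 0 := by
  ext n
  simp only [PowerSeries.coeff_mk]
  rcases eq_or_ne n 0 with rfl | hn
  · simp
  have hp0 : (p : ℚ) ≠ 0 := Nat.cast_ne_zero.mpr hp.pos.ne'
  by_cases hpn : p ∣ n
  · -- RHS is 0
    rw [if_neg hn, if_neg (show ¬(n ≠ 0 ∧ ¬ p ∣ n) from fun h => h.2 hpn)]
    set e := n.factorization p with he
    set k := n / p ^ (n.factorization p) with hkdef
    have hk : ¬ p ∣ k := Nat.not_dvd_ordCompl hp hn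
    have hk0 : k ≠ 0 := Nat.ordCompl_pos p hn |>.ne'
    have hk0' : (k : ℚ) ≠ 0 := Nat.cast_ne_zero.mpr hk0
    have hn_eq : p ^ e * k = n := Nat.ordProj_mul_ordCompl_eq_self n p
    have he1 : 1 ≤ e := by
      rw [he]
      have := (Nat.Prime.pow_dvd_iff_le_factorization hp (k := 1) hn).mp (by simpa using hpn)
      omega
    have hcop : ∀ i : ℕ, Nat.Coprime (p ^ i) k :=
      fun i => (Nat.Coprime.pow_left i ((Nat.Prime.coprime_iff_not_dvd hp).mpr hk))
    have hai : ∀ i : ℕ, a (p ^ i * k) = a (p ^ i) * a k := fun i =>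
      hmul _ _ (Nat.one_le_iff_ne_zero.mpr (pow_ne_zero i hp.pos.ne')) (Nat.one_le_iff_ne_zero.mpr hk0) (hcop i)
    rcases e with _ | _ | j
    · omega
    · -- e = 1
      have hn1 : n = p * k := by rw [← hn_eq]; ring
      have hdivp : n / p = k := by rw [hn1, Nat.mul_div_cancel_left _ hp.pos]
      have hnd2 : ¬ p ^ 2 ∣ n := by
        intro h
        have := (Nat.Prime.pow_dvd_iff_le_factorization hp (k := 2) hn).mp h
        omega
      rw [if_neg hnd2, if_pos hpn, hdivp, hn1,
        hmul p k hp.pos (Nat.one_le_iff_ne_zero.mpr hk0) ((hp.coprime_iff_not_dvd).mpr hk)]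
      push_cast [pow_one] at *
      field_simp
      ring
    · -- e = j + 2
      have hn1 : n = p ^ (j + 2) * k := hn_eq.symm
      have hdivp : n / p = p ^ (j + 1) * k := by
        rw [hn1, show p ^ (j + 2) * k = p * (p ^ (j + 1) * k) by ring,
          Nat.mul_div_cancel_left _ hp.pos]
      have hdivp2 : n / p ^ 2 = p ^ j * k := by
        rw [hn1, show p ^ (j + 2) * k = p ^ 2 * (p ^ j * k) by ring,
          Nat.mul_div_cancel_left _ (pow_pos hp.pos 2)]
      have hd2 : p ^ 2 ∣ n := ⟨p ^ j * k, by rw [hn1]; ring⟩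
      rw [if_pos hd2, if_pos hpn, hdivp, hdivp2, hn1, hai j, hai (j + 1), hai (j + 2)]
      have hrec' : a (p ^ (j + 1)) * a p = a (p ^ (j + 2)) + p * a (p ^ j) := by
        have := hrec p (j + 2) hp hpN (by omega)
        simpa using this
      have hz : a (p ^ (j + 2)) = a (p ^ (j + 1)) * a p - p * a (p ^ j) := by
        linarith [hrec']
      rw [hz]
      have hpj : ((p : ℚ)) ^ j ≠ 0 := pow_ne_zero j hp0
      push_cast
      field_simp
      ring
  · -- ¬ p ∣ n
    have hnd2 : ¬ p ^ 2 ∣ n := fun h => hpn (dvd_trans (dvd_pow_self p two_ne_zero) h)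
    rw [if_neg hn, if_neg hnd2, if_neg hpn, if_pos ⟨hn, hpn⟩]
    have hn0 : (n : ℚ) ≠ 0 := Nat.cast_ne_zero.mpr hn
    field_simp
    ring
end

section
/- The p×p matrix M with rows R_a = (a·q_1^{a(p-1)}, ..., a·q_p^{a(p-1)}) for a = 1,...,p−1 and last row (s/q_1, ..., s/q_p) where s = q_1⋯q_p, has nonzero determinant over the field of rational functions in q_1,...,q_p over a field of characteristic 0 or of characteristic coprime to (p−1)!. -/
/-!
Multiplying column `j` by `X j` turns the last row into the constant `∏ i, X i`, which then
factors out of that row; the determinant becomes, up to this nonzero factor, that of the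
generalized Vandermonde matrix `(c a * X j ^ d a)` with `d a = (a + 1)(p - 1) + 1` for `a < p - 1`
and `d (p - 1) = 0`. Since the exponents `d a` are distinct, the diagonal term of its Leibniz
expansion is the only one contributing the monomial `∏ j, X j ^ d j`, with coefficient `∏ a, c a`.
-/

open Finset MvPolynomial Matrix Function

theorem Matrix.prod_mul_det_eq_prod_mul_det {R n : Type*} [CommRing R] [Fintype n]
    [DecidableEq n] {M N : Matrix n n R} (f w : n → R) (h : ∀ a j, f j * M a j = w a * N a j) :
    (∏ j, f j) * M.det = (∏ a, w a) * N.det := by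
  rw [← det_mul_row, ← det_mul_column]
  exact congrArg det (Matrix.ext h)

namespace MvPolynomial

variable {R n : Type*} [CommRing R] [Fintype n] [DecidableEq n]

theorem coeff_det_X_pow {d : n → ℕ} (hd : Injective d) :
    coeff (Finsupp.equivFunOnFinite.symm d)
      (det (of fun a j => (X j : MvPolynomial n R) ^ d a)) = 1 := by
  have hexp : ∀ σ : Equiv.Perm n, Finsupp.equivFunOnFinite.symm d =
      Finsupp.indicator univ (fun i _ => d (σ i)) ↔ σ = 1 := by
    intro σ
    simp [Finsupp.ext_iff, Equiv.ext_iff, hd.eq_iff, eq_comm]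
  rw [det_apply, coeff_sum, sum_eq_single 1]
  · simp [coeff_prod_X_pow, (hexp 1).2]
  · intro σ _ hσ
    simp only [of_apply]
    rw [Units.smul_def, coeff_smul, coeff_prod_X_pow, if_neg (mt (hexp σ).1 hσ), smul_zero]
  · simp

theorem det_C_mul_X_pow_ne_zero [IsDomain R] {c : n → R} {d : n → ℕ} (hc : ∀ a, c a ≠ 0)
    (hd : Injective d) : det (of fun a j => C (c a) * (X j : MvPolynomial n R) ^ d a) ≠ 0 := by
  have h := det_mul_column (fun a => C (c a)) (of fun a j => (X j : MvPolynomial n R) ^ d a)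
  simp only [of_apply] at h
  rw [h, ← map_prod]
  refine mul_ne_zero (C_ne_zero.2 (prod_ne_zero_iff.2 fun a _ => hc a)) fun h => ?_
  simpa [h] using coeff_det_X_pow (R := R) hd

end MvPolynomial

theorem stmt12_general {k : Type*} [Field k] (p : ℕ)
    (hinv : ∀ a : ℕ, 1 ≤ a → a ≤ p - 1 → (a : k) ≠ 0) :
    Matrix.det (Matrix.of fun a j : Fin p =>
      if (a : ℕ) < p - 1 then
        (((a : ℕ) + 1 : ℕ) : MvPolynomial (Fin p) k) *
          MvPolynomial.X j ^ (((a : ℕ) + 1) * (p - 1))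
      else ∏ i ∈ Finset.univ.erase j, MvPolynomial.X i) ≠ 0 := by
  classical
  set c : Fin p → k := fun a => if (a : ℕ) < p - 1 then (((a : ℕ) + 1 : ℕ) : k) else 1
  set d : Fin p → ℕ := fun a => if (a : ℕ) < p - 1 then ((a : ℕ) + 1) * (p - 1) + 1 else 0
  set w : Fin p → MvPolynomial (Fin p) k := fun a => if (a : ℕ) < p - 1 then 1 else ∏ i, X i
  have hc : ∀ a, c a ≠ 0 := fun a => by
    by_cases ha : (a : ℕ) < p - 1
    · simpa [c, ha] using hinv ((a : ℕ) + 1) (by omega) (by omega)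
    · simp [c, ha]
  have hd : Injective d := fun a b hab => by
    simp only [d] at hab
    split_ifs at hab with ha hb hb
    · have := Nat.eq_of_mul_eq_mul_right (by omega) (Nat.succ_injective hab)
      exact Fin.ext (by omega)
    all_goals omega
  have hw : ∏ a, w a ≠ 0 := prod_ne_zero_iff.2 fun a _ => by
    by_cases ha : (a : ℕ) < p - 1
    · simp [w, ha]
    · simp [w, ha, prod_ne_zero_iff, X_ne_zero]
  refine right_ne_zero_of_mul (a := ∏ j, (X j : MvPolynomial (Fin p) k)) ?_
  rw [prod_mul_det_eq_prod_mul_det X w (N := of fun a j => C (c a) * X j ^ d a) fun a j => by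
    by_cases ha : (a : ℕ) < p - 1
    · simp only [of_apply, c, d, w, ha, if_true, map_natCast]
      ring
    · simp [c, d, w, ha, mul_prod_erase]]
  exact mul_ne_zero hw (det_C_mul_X_pow_ne_zero hc hd)

/-- The `p×p` matrix with rows `(a·q_1^{a(p−1)}, ..., a·q_p^{a(p−1)})` for
`a = 1,...,p−1` and last row `(s/q_1, ..., s/q_p)` where `s = q_1⋯q_p`
(so `s/q_j = ∏_{i≠j} q_i`) has nonzero determinant, provided `1,...,p−1`
are invertible in the base field `k`. -/
theorem stmt12 {k : Type*} [Field k] (p : ℕ) (hp : 2 ≤ p)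
    (hinv : ∀ a : ℕ, 1 ≤ a → a ≤ p - 1 → (a : k) ≠ 0) :
    Matrix.det (Matrix.of fun a j : Fin p =>
      if (a : ℕ) < p - 1 then
        (((a : ℕ) + 1 : ℕ) : MvPolynomial (Fin p) k) *
          MvPolynomial.X j ^ (((a : ℕ) + 1) * (p - 1))
      else ∏ i ∈ Finset.univ.erase j, MvPolynomial.X i) ≠ 0 :=
  stmt12_general p hinv
end
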